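/- Let ε > 0. For every real y ≥ 0, |h_ε(y)| ≤ 1/2, where h_ε(y) = y·(g_ε(y + 1) − g_ε(y)) + g_ε(y + 1) and g_ε(x) = (exp(−ε·x)/2)·(1 + ε·x/2). -/

import Mathlib

/-!
Writing `F(t) = t·g_ε(t)`, we have `h_ε(y) = F(y + 1) − F(y)`, and
`F'(t) = exp(−εt)·(1 − (εt)²/2)/2`. By the mean value theorem `h_ε(y) = F'(c)` for some
`c ≥ y ≥ 0`, and `|1 − u²/2| ≤ eᵘ` for `u ≥ 0` (the lower side is the quadratic Taylor bound
for `exp`), so `|F'(c)| ≤ 1/2`.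
-/

open Real

/-- `g_ε(x) = (exp(−ε·x)/2)·(1 + ε·x/2)`. -/
noncomputable def gFn (ε x : ℝ) : ℝ := Real.exp (-ε * x) / 2 * (1 + ε * x / 2)

/-- `h_ε(y) = y·(g_ε(y + 1) − g_ε(y)) + g_ε(y + 1)`. -/
noncomputable def hFn (ε y : ℝ) : ℝ :=
  y * (gFn ε (y + 1) - gFn ε y) + gFn ε (y + 1)

theorem hFn_eq_sub (ε y : ℝ) : hFn ε y = (y + 1) * gFn ε (y + 1) - y * gFn ε y := by
  rw [hFn]
  ring

theorem hasDerivAt_mul_gFn (ε x : ℝ) :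
    HasDerivAt (fun t ↦ t * gFn ε t) (exp (-ε * x) * (1 - (ε * x) ^ 2 / 2) / 2) x := by
  have hexp : HasDerivAt (fun t ↦ exp (-ε * t)) (exp (-ε * x) * -ε) x := by
    simpa using ((hasDerivAt_id x).const_mul (-ε)).exp
  have hlin : HasDerivAt (fun t ↦ 1 + ε * t / 2) (ε / 2) x := by
    simpa using (((hasDerivAt_id x).const_mul ε).div_const 2).const_add 1
  have hprod : HasDerivAt (fun t ↦ t * gFn ε t)
      (1 * gFn ε x + x * (exp (-ε * x) * -ε / 2 * (1 + ε * x / 2) + exp (-ε * x) / 2 * (ε / 2)))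
      x :=
    (hasDerivAt_id' x).fun_mul ((hexp.div_const 2).fun_mul hlin)
  exact hprod.congr_deriv (by rw [gFn]; ring)

theorem abs_one_sub_sq_div_two_le_exp {u : ℝ} (hu : 0 ≤ u) : |1 - u ^ 2 / 2| ≤ exp u := by
  rw [abs_le]
  constructor <;> nlinarith [quadratic_le_exp_of_nonneg hu]

theorem abs_exp_neg_mul_one_sub_sq_div_two_le_one {u : ℝ} (hu : 0 ≤ u) :
    |exp (-u) * (1 - u ^ 2 / 2)| ≤ 1 :=
  calc |exp (-u) * (1 - u ^ 2 / 2)| = exp (-u) * |1 - u ^ 2 / 2| := by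
        rw [abs_mul, abs_of_pos (exp_pos _)]
    _ ≤ exp (-u) * exp u := by gcongr; exact abs_one_sub_sq_div_two_le_exp hu
    _ = 1 := by rw [← exp_add, neg_add_cancel, exp_zero]

theorem abs_hFn_le_half (ε : ℝ) (hε : 0 < ε) (y : ℝ) (hy : 0 ≤ y) :
    |hFn ε y| ≤ 1 / 2 := by
  obtain ⟨c, hc, hslope⟩ := exists_hasDerivAt_eq_slope (fun t ↦ t * gFn ε t)
    (fun x ↦ exp (-ε * x) * (1 - (ε * x) ^ 2 / 2) / 2) (lt_add_one y)
    (fun x _ ↦ (hasDerivAt_mul_gFn ε x).continuousAt.continuousWithinAt)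
    (fun x _ ↦ hasDerivAt_mul_gFn ε x)
  have hmvt : hFn ε y = exp (-(ε * c)) * (1 - (ε * c) ^ 2 / 2) / 2 := by
    rw [hFn_eq_sub, neg_mul_eq_neg_mul, hslope, add_sub_cancel_left, div_one]
  have hεc : 0 ≤ ε * c := mul_nonneg hε.le (hy.trans hc.1.le)
  rw [hmvt, abs_div, abs_two]
  linarith [abs_exp_neg_mul_one_sub_sq_div_two_le_one hεc]
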